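/- Let C be a compactly convex subset of ℝⁿ (for some n ∈ ℕ). Then there exists a map Φ assigning to each point x ∈ C a nonempty compact subset Φ(x) ⊆ C, continuous with respect to the Vietoris topology on the hyperspace exp(C) of nonempty compact subsets of C, such that for every subset F ⊆ C the convex hull conv(F) is contained in ⋃_{x ∈ F} Φ(x). -/
import Mathlib


open TopologicalSpace Set Topology

/-- The Vietoris topology on the hyperspace `exp C` of nonempty compact subsets of `C`,
generated by the subbasic sets `⟨U⟩ = {K : K ⊆ U}` and `⟩U⟨ = {K : K ∩ U ≠ ∅}`
for `U` open in `C`. -/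
def vietorisTopology (C : Type*) [TopologicalSpace C] :
    TopologicalSpace (NonemptyCompacts C) :=
  generateFrom
    ({S | ∃ U : Set C, IsOpen U ∧ S = {K : NonemptyCompacts C | (K : Set C) ⊆ U}} ∪
     {S | ∃ U : Set C, IsOpen U ∧ S = {K : NonemptyCompacts C | ((K : Set C) ∩ U).Nonempty}})

/-- A convex set `X` in a real topological vector space is compactly convex if there is a
map `Φ` assigning to each `x ∈ X` a nonempty compact subset `Φ(x) ⊆ X`, continuous with
respect to the Vietoris topology, such that `[x,y] ⊆ Φ(x) ∪ Φ(y)` for all `x, y ∈ X`. -/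
def IsCompactlyConvex {L : Type*} [TopologicalSpace L] [AddCommGroup L] [Module ℝ L]
    (X : Set L) : Prop :=
  ∃ Φ : X → NonemptyCompacts X,
    @Continuous _ _ _ (vietorisTopology X) Φ ∧
    ∀ x y : X, segment ℝ (x : L) (y : L) ⊆ Subtype.val '' ((Φ x : Set X) ∪ (Φ y : Set X))

/-- A convex set `X` is upper compactly convex if there is an upper semicontinuous
map `Φ` assigning to each `x ∈ X` a nonempty compact subset `Φ(x) ⊆ X` such that
`[x,y] ⊆ Φ(x) ∪ Φ(y)` for all `x, y ∈ X`. -/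
def IsUpperCompactlyConvex {L : Type*} [TopologicalSpace L] [AddCommGroup L] [Module ℝ L]
    (X : Set L) : Prop :=
  ∃ Φ : X → NonemptyCompacts X,
    (∀ U : Set X, IsOpen U → IsOpen {x : X | (Φ x : Set X) ⊆ U}) ∧
    ∀ x y : X, segment ℝ (x : L) (y : L) ⊆ Subtype.val '' ((Φ x : Set X) ∪ (Φ y : Set X))

section Aux

variable {X : Type*} [TopologicalSpace X]

lemma vietoris_isOpen_miss {U : Set X} (hU : IsOpen U) :
    IsOpen[vietorisTopology X] {K : NonemptyCompacts X | (K : Set X) ⊆ U} :=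
  isOpen_generateFrom_of_mem (Or.inl ⟨U, hU, rfl⟩)

lemma vietoris_isOpen_hit {U : Set X} (hU : IsOpen U) :
    IsOpen[vietorisTopology X] {K : NonemptyCompacts X | ((K : Set X) ∩ U).Nonempty} :=
  isOpen_generateFrom_of_mem (Or.inr ⟨U, hU, rfl⟩)

lemma vietoris_continuous_iff {Y : Type*} {tY : TopologicalSpace Y}
    (f : Y → NonemptyCompacts X) :
    Continuous[tY, vietorisTopology X] f ↔
      (∀ U : Set X, IsOpen U → IsOpen[tY] {y | (f y : Set X) ⊆ U}) ∧
      (∀ U : Set X, IsOpen U → IsOpen[tY] {y | ((f y : Set X) ∩ U).Nonempty}) := by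
  rw [vietorisTopology, continuous_generateFrom_iff]
  constructor
  · intro h
    refine ⟨fun U hU => ?_, fun U hU => ?_⟩
    · simpa [Set.preimage] using h _ (Or.inl ⟨U, hU, rfl⟩)
    · simpa [Set.preimage] using h _ (Or.inr ⟨U, hU, rfl⟩)
  · rintro ⟨h1, h2⟩ s (⟨U, hU, rfl⟩ | ⟨U, hU, rfl⟩)
    · simpa [Set.preimage] using h1 U hU
    · simpa [Set.preimage] using h2 U hU

lemma usc_compact_biUnion (Φ : X → NonemptyCompacts X)
    (husc : ∀ U : Set X, IsOpen U → IsOpen {x | (Φ x : Set X) ⊆ U})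
    {K : Set X} (hK : IsCompact K) :
    IsCompact (⋃ x ∈ K, (Φ x : Set X)) := by
  classical
  rw [isCompact_iff_finite_subcover]
  intro ι U hU hcov
  have key : ∀ y ∈ K, ∃ t : Finset ι, (Φ y : Set X) ⊆ ⋃ i ∈ t, U i := fun y hy =>
    (Φ y).isCompact.elim_finite_subcover U hU ((subset_biUnion_of_mem hy).trans hcov)
  choose! t ht using key
  obtain ⟨s, hsK, hsfin, hcov2⟩ :=
    hK.elim_finite_subcover_image
      (b := K) (c := fun y => {x : X | (Φ x : Set X) ⊆ ⋃ i ∈ t y, U i})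
      (fun y _ => husc _ (isOpen_biUnion fun i _ => hU i))
      (fun x hx => mem_biUnion hx (ht x hx))
  refine ⟨hsfin.toFinset.biUnion t, ?_⟩
  rintro z hz
  simp only [mem_iUnion] at hz
  obtain ⟨x, hxK, hz⟩ := hz
  have hx2 := hcov2 hxK
  simp only [mem_iUnion] at hx2
  obtain ⟨y, hys, hxy⟩ := hx2
  have hz2 := hxy hz
  simp only [mem_iUnion] at hz2
  obtain ⟨i, hit, hzi⟩ := hz2
  simp only [mem_iUnion]
  exact ⟨i, Finset.mem_biUnion.2 ⟨y, hsfin.mem_toFinset.2 hys, hit⟩, hzi⟩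

/-- the hyperspace lift of `Φ`. -/
noncomputable def hatMap (Φ : X → NonemptyCompacts X)
    (husc : ∀ U : Set X, IsOpen U → IsOpen {x | (Φ x : Set X) ⊆ U})
    (hmem : ∀ x, x ∈ (Φ x : Set X)) (K : NonemptyCompacts X) : NonemptyCompacts X :=
  ⟨⟨⋃ x ∈ (K : Set X), (Φ x : Set X), usc_compact_biUnion Φ husc K.isCompact⟩,
    K.nonempty.elim fun x hx => ⟨x, mem_biUnion hx (hmem x)⟩⟩

lemma coe_hatMap (Φ : X → NonemptyCompacts X) (husc) (hmem) (K : NonemptyCompacts X) :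
    (hatMap Φ husc hmem K : Set X) = ⋃ x ∈ (K : Set X), (Φ x : Set X) := rfl

lemma subset_hatMap (Φ : X → NonemptyCompacts X) (husc) (hmem) (K : NonemptyCompacts X) :
    (K : Set X) ⊆ (hatMap Φ husc hmem K : Set X) :=
  fun x hx => mem_biUnion hx (hmem x)

lemma hatMap_continuous (Φ : X → NonemptyCompacts X)
    (hΦ : @Continuous X _ _ (vietorisTopology X) Φ) (husc) (hmem) :
    Continuous[vietorisTopology X, vietorisTopology X] (hatMap Φ husc hmem) := by
  obtain ⟨h1, h2⟩ := (vietoris_continuous_iff Φ).1 hΦ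
  rw [vietoris_continuous_iff]
  constructor
  · intro U hU
    have he : {K : NonemptyCompacts X | (hatMap Φ husc hmem K : Set X) ⊆ U} =
        {K : NonemptyCompacts X | (K : Set X) ⊆ {x | (Φ x : Set X) ⊆ U}} := by
      ext K
      simp [coe_hatMap, iUnion_subset_iff, Set.subset_def (s := (K : Set X))]
    rw [he]
    exact vietoris_isOpen_miss (h1 U hU)
  · intro U hU
    have he : {K : NonemptyCompacts X | ((hatMap Φ husc hmem K : Set X) ∩ U).Nonempty} =
        {K : NonemptyCompacts X |
          ((K : Set X) ∩ {x | ((Φ x : Set X) ∩ U).Nonempty}).Nonempty} := by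
      ext K
      constructor
      · rintro ⟨z, hz, hzU⟩
        rw [coe_hatMap] at hz
        simp only [mem_iUnion] at hz
        obtain ⟨x, hxK, hzx⟩ := hz
        exact ⟨x, hxK, z, hzx, hzU⟩
      · rintro ⟨x, ⟨hxK, z, hzx, hzU⟩⟩
        exact ⟨z, subset_biUnion_of_mem (u := fun x => (Φ x : Set X)) hxK hzx, hzU⟩
    rw [he]
    exact vietoris_isOpen_hit (h2 U hU)

end Aux

/-- For a finite-dimensional compactly convex set `C ⊆ ℝⁿ` there is a continuous
compact-valued map `Φ` with `conv F ⊆ ⋃_{x ∈ F} Φ x` for every subset `F ⊆ C`. -/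
theorem finiteDimensional_compactlyConvex_hull_cover
    {n : ℕ} (C : Set (EuclideanSpace ℝ (Fin n)))
    (hconv : Convex ℝ C) (hC : IsCompactlyConvex C) :
    ∃ Φ : C → NonemptyCompacts C,
      @Continuous _ _ _ (vietorisTopology C) Φ ∧
      ∀ F : Set (EuclideanSpace ℝ (Fin n)), ∀ hF : F ⊆ C,
        convexHull ℝ F ⊆ ⋃ x : F, Subtype.val '' (Φ (Set.inclusion hF x) : Set C) := by
  classical
  obtain ⟨Φ, hΦc, hΦseg⟩ := hC
  -- x ∈ Φ x
  have hmem : ∀ x : C, x ∈ (Φ x : Set C) := by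
    intro x
    have hx : (x : (EuclideanSpace ℝ (Fin n))) ∈ Subtype.val '' ((Φ x : Set C) ∪ (Φ x : Set C)) :=
      hΦseg x x (left_mem_segment ℝ (x : (EuclideanSpace ℝ (Fin n))) (x : (EuclideanSpace ℝ (Fin n))))
    obtain ⟨y, hy, hyx⟩ := hx
    rw [Set.union_self] at hy
    rwa [Subtype.ext hyx] at hy
  have husc : ∀ U : Set C, IsOpen U → IsOpen {x : C | (Φ x : Set C) ⊆ U} :=
    ((vietoris_continuous_iff Φ).1 hΦc).1
  set hat : NonemptyCompacts ↥C → NonemptyCompacts ↥C := hatMap Φ husc hmem with hhat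
  set Ψ : C → NonemptyCompacts ↥C := fun x => hat^[n] (Φ x) with hΨ
  -- continuity of the iterates
  have hcont : ∀ k : ℕ, @Continuous ↥C _ _ (vietorisTopology ↥C) (fun x : C => hat^[k] (Φ x)) := by
    intro k
    induction k with
    | zero => simpa using hΦc
    | succ k ih =>
        have hcomp := @Continuous.comp ↥C (NonemptyCompacts ↥C) (NonemptyCompacts ↥C)
          _ (vietorisTopology ↥C) (vietorisTopology ↥C) (fun x : C => hat^[k] (Φ x)) hat
          (hatMap_continuous Φ hΦc husc hmem) ih
        have : (hat ∘ fun x : C => hat^[k] (Φ x)) = fun x : C => hat^[k + 1] (Φ x) := by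
          funext x
          simp [Function.comp, Function.iterate_succ_apply']
        rwa [this] at hcomp
  -- monotonicity in k
  have hmono : ∀ k : ℕ, ∀ x : C, (Φ x : Set C) ⊆ (hat^[k] (Φ x) : Set C) := by
    intro k
    induction k with
    | zero => intro x; simp
    | succ k ih =>
        intro x
        rw [Function.iterate_succ_apply']
        exact (ih x).trans (subset_hatMap Φ husc hmem _)
  -- absorption
  have hkey : ∀ k : ℕ, ∀ x : C, ∀ y : C, y ∈ (hat^[k] (Φ x) : Set C) →
      (Φ y : Set C) ⊆ (hat^[k + 1] (Φ x) : Set C) := by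
    intro k x y hy
    rw [Function.iterate_succ_apply']
    exact subset_biUnion_of_mem (u := fun z : C => (Φ z : Set C)) hy
  -- the ambient-space version of the iterated map
  set G : ℕ → (EuclideanSpace ℝ (Fin n)) → Set (EuclideanSpace ℝ (Fin n)) := fun k x => ⋃ h : x ∈ C, Subtype.val '' (hat^[k] (Φ ⟨x, h⟩) : Set C)
    with hG
  have hGmem : ∀ k (x : (EuclideanSpace ℝ (Fin n))) (h : x ∈ C), x ∈ G k x := by
    intro k x h
    simp only [hG, mem_iUnion]
    exact ⟨h, ⟨x, h⟩, hmono k ⟨x, h⟩ (hmem ⟨x, h⟩), rfl⟩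
  -- main combinatorial lemma
  have main : ∀ k : ℕ, ∀ t : Finset (EuclideanSpace ℝ (Fin n)), ↑t ⊆ C → t.card ≤ k + 1 →
      convexHull ℝ (↑t : Set (EuclideanSpace ℝ (Fin n))) ⊆ ⋃ x ∈ (↑t : Set (EuclideanSpace ℝ (Fin n))), G k x := by
    intro k
    induction k with
    | zero =>
        intro t htC hcard
        rcases t.eq_empty_or_nonempty with rfl | ⟨a, ha⟩
        · simp
        · have : t = {a} := Finset.eq_singleton_iff_unique_mem.2
            ⟨ha, fun b hb => Finset.card_le_one.1 hcard b hb a ha⟩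
          subst this
          intro p hp
          simp only [Finset.coe_singleton, convexHull_singleton, mem_singleton_iff] at hp
          subst hp
          exact mem_biUnion (by simp) (hGmem 0 p (htC (by simp)))
    | succ k ih =>
        intro t htC hcard
        rcases t.eq_empty_or_nonempty with rfl | ⟨a, ha⟩
        · simp
        · have haC : a ∈ C := htC ha
          rcases (t.erase a).eq_empty_or_nonempty with he | hne
          · have : t = {a} := by
              have := Finset.insert_erase ha
              rw [he] at this
              simpa using this.symm
            subst this
            intro p hp
            simp only [Finset.coe_singleton, convexHull_singleton, mem_singleton_iff] at hp
            subst hp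
            exact mem_biUnion (by simp) (hGmem (k + 1) p haC)
          · set s := t.erase a with hs
            have htins : (↑t : Set (EuclideanSpace ℝ (Fin n))) = insert a (↑s : Set (EuclideanSpace ℝ (Fin n))) := by
              rw [hs, ← Finset.coe_insert, Finset.insert_erase ha]
            have hsC : (↑s : Set (EuclideanSpace ℝ (Fin n))) ⊆ C := fun x hx => htC (Finset.erase_subset a t hx)
            have hscard : s.card ≤ k + 1 := by
              rw [hs, Finset.card_erase_of_mem ha]
              omega
            intro p hp
            rw [htins, convexHull_insert (by exact_mod_cast hne)] at hp
            rw [mem_convexJoin] at hp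
            obtain ⟨a', ha', z, hz, hpz⟩ := hp
            rw [mem_singleton_iff] at ha'
            rw [ha'] at hpz
            have hzG := ih s hsC hscard hz
            simp only [mem_iUnion] at hzG
            obtain ⟨x, hxs, hzGx⟩ := hzG
            simp only [hG, mem_iUnion] at hzGx
            obtain ⟨hxC, w, hw, hwz⟩ := hzGx
            have hzC : z ∈ C := hwz ▸ w.2
            have hseg := hΦseg ⟨a, haC⟩ ⟨z, hzC⟩ hpz
            obtain ⟨u, hu, hup⟩ := hseg
            rcases hu with hu | hu
            · refine mem_biUnion (by rw [htins]; exact mem_insert a _) ?_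
              simp only [hG, mem_iUnion]
              exact ⟨haC, u, hmono (k + 1) ⟨a, haC⟩ hu, hup⟩
            · refine mem_biUnion (by rw [htins]; exact mem_insert_of_mem a hxs) ?_
              simp only [hG, mem_iUnion]
              refine ⟨hxC, u, ?_, hup⟩
              have hwmem : (⟨z, hzC⟩ : C) ∈ (hat^[k] (Φ ⟨x, hxC⟩) : Set C) := by
                have : w = (⟨z, hzC⟩ : C) := Subtype.ext hwz
                rwa [this] at hw
              exact hkey k ⟨x, hxC⟩ ⟨z, hzC⟩ hwmem hu
  refine ⟨Ψ, hcont n, ?_⟩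
  intro F hF
  rw [convexHull_eq_union]
  rintro p hp
  simp only [mem_iUnion] at hp
  obtain ⟨t, htF, hai, hp⟩ := hp
  have hcard : t.card ≤ n + 1 := by
    have h1 := hai.card_le_finrank_succ
    have h2 : Module.finrank ℝ (vectorSpan ℝ (Set.range ((↑) : ↥t → (EuclideanSpace ℝ (Fin n))))) ≤
        Module.finrank ℝ (EuclideanSpace ℝ (Fin n)) := Submodule.finrank_le _
    have h3 : Module.finrank ℝ (EuclideanSpace ℝ (Fin n)) = n := finrank_euclideanSpace_fin
    rw [Fintype.card_coe] at h1
    omega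
  have := main n t (htF.trans hF) hcard hp
  simp only [mem_iUnion] at this
  obtain ⟨x, hxt, hxG⟩ := this
  simp only [hG, mem_iUnion] at hxG
  obtain ⟨hxC, hpmem⟩ := hxG
  have hxF : x ∈ F := htF hxt
  refine mem_iUnion.2 ⟨⟨x, hxF⟩, ?_⟩
  exact hpmem
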